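/- The subgroup of the affine group of ℂ generated by the involutions ι_n(x) = 2^{1−n} − x, for all n ∈ ℤ, equals the set of maps x ↦ εx + a with ε ∈ {1, −1} and a ∈ ℤ[1/2] (the dyadic rationals). In particular, this group is not finitely generated. -/

import Mathlib

/-!
The product `ι_m ∘ ι_{m+1}` is the translation by `2^{-m}`, so the group generated by the `ι_n`
contains every translation by a dyadic rational, and composing these with `ι_0` gives every map
`x ↦ -x + a` with `a` dyadic. Conversely, for any additive subgroup `A` the maps `x ↦ ±x + a` with
`a ∈ A` form a group, and each `ι_n` is of this form with `A = ℤ[1/2]`. Finitely many elements of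
this group only involve the denominators up to some `2^K`, hence generate a subgroup of the maps
with `a ∈ 2^{-K}ℤ`, which misses the translation by `2^{-K-1}`.
-/

/-- The affine involution `ι_n : x ↦ 2^{1-n} - x` of `ℂ`, for `n ∈ ℤ`. -/
noncomputable def iotaN (n : ℤ) : Equiv.Perm ℂ where
  toFun x := 2 ^ (1 - n) - x
  invFun x := 2 ^ (1 - n) - x
  left_inv := fun x => by ring
  right_inv := fun x => by ring

open Equiv Subgroup Set

section SignedAffine

variable {R : Type*} [Ring R]

def signedAffine (A : AddSubgroup R) : Subgroup (Perm R) where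
  carrier := {f | ∃ ε a : R, (ε = 1 ∨ ε = -1) ∧ a ∈ A ∧ ∀ x, f x = ε * x + a}
  one_mem' := ⟨1, 0, Or.inl rfl, A.zero_mem, fun x => by simp⟩
  mul_mem' := by
    rintro f g ⟨ε, a, hε, ha, hf⟩ ⟨δ, b, hδ, hb, hg⟩
    refine ⟨ε * δ, ε * b + a, ?_, A.add_mem ?_ ha, fun x => ?_⟩
    · rcases hε with rfl | rfl <;> rcases hδ with rfl | rfl <;> simp
    · rcases hε with rfl | rfl
      · simpa using hb
      · simpa using A.neg_mem hb
    · rw [Perm.mul_apply, hg, hf]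
      noncomm_ring
  inv_mem' := by
    rintro f ⟨ε, a, hε, ha, hf⟩
    have hεε : ε * ε = 1 := by rcases hε with rfl | rfl <;> simp
    refine ⟨ε, -(ε * a), hε, ?_, fun x => ?_⟩
    · rcases hε with rfl | rfl
      · simpa using A.neg_mem ha
      · simpa using ha
    · rw [Perm.inv_eq_iff_eq, hf, mul_add, ← mul_assoc, hεε, one_mul, mul_neg, ← mul_assoc, hεε,
        one_mul, neg_add_cancel_right]

theorem mem_signedAffine {A : AddSubgroup R} {f : Perm R} :
    f ∈ signedAffine A ↔ ∃ ε a : R, (ε = 1 ∨ ε = -1) ∧ a ∈ A ∧ ∀ x, f x = ε * x + a :=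
  Iff.rfl

theorem signedAffine_mono : Monotone (signedAffine (R := R)) :=
  fun _ _ hAB _ ⟨ε, a, hε, ha, hf⟩ => ⟨ε, a, hε, hAB ha, hf⟩

theorem addLeft_mem_signedAffine_iff {A : AddSubgroup R} {a : R} :
    Equiv.addLeft a ∈ signedAffine A ↔ a ∈ A := by
  refine ⟨fun ⟨ε, b, _, hb, hf⟩ => ?_, fun ha => ⟨1, a, Or.inl rfl, ha, fun x => ?_⟩⟩
  · exact (by simpa using hf 0 : a = b) ▸ hb
  · simp [add_comm]

end SignedAffine

def translationSubgroup {G : Type*} [AddGroup G] (H : Subgroup (Perm G)) : AddSubgroup G where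
  carrier := {a | Equiv.addLeft a ∈ H}
  zero_mem' := by simp [H.one_mem]
  add_mem' ha hb := by simpa using H.mul_mem ha hb
  neg_mem' ha := by simpa using H.inv_mem ha

noncomputable section Dyadic

def dyadicLevel (k : ℕ) : AddSubgroup ℂ := AddSubgroup.zmultiples ((2 : ℂ) ^ k)⁻¹

def dyadic : AddSubgroup ℂ := ⨆ k, dyadicLevel k

theorem dyadicLevel_mono : Monotone dyadicLevel :=
  monotone_nat_of_le_succ fun k => AddSubgroup.zmultiples_le.2
    ⟨2, show (2 : ℤ) • ((2 : ℂ) ^ (k + 1))⁻¹ = ((2 : ℂ) ^ k)⁻¹ by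
      rw [two_zsmul, ← two_mul, pow_succ', mul_inv, mul_inv_cancel_left₀ two_ne_zero]⟩

theorem mem_dyadic_iff_exists_mem_dyadicLevel {a : ℂ} : a ∈ dyadic ↔ ∃ k, a ∈ dyadicLevel k :=
  AddSubgroup.mem_iSup_of_directed dyadicLevel_mono.directed_le

theorem mem_dyadic_iff {a : ℂ} : a ∈ dyadic ↔ ∃ (m : ℤ) (k : ℕ), a = (m : ℂ) / 2 ^ k := by
  simp only [mem_dyadic_iff_exists_mem_dyadicLevel, dyadicLevel, AddSubgroup.mem_zmultiples_iff,
    zsmul_eq_mul, ← div_eq_mul_inv, eq_comm (a := a)]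
  exact exists_comm

theorem two_zpow_mem_dyadic (j : ℤ) : (2 : ℂ) ^ j ∈ dyadic := by
  rw [mem_dyadic_iff]
  obtain ⟨n, rfl | rfl⟩ := Int.eq_nat_or_neg j
  · exact ⟨2 ^ n, 0, by simp⟩
  · exact ⟨1, n, by simp⟩

theorem inv_two_pow_succ_notMem_dyadicLevel (k : ℕ) : ((2 : ℂ) ^ (k + 1))⁻¹ ∉ dyadicLevel k := by
  rintro ⟨m, hm⟩
  have h : ((m * 2 : ℤ) : ℂ) = (1 : ℤ) := by
    simp only [zsmul_eq_mul, pow_succ, mul_inv] at hm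
    push_cast
    field_simp at hm
    linear_combination hm
  have := Int.cast_injective h
  omega

end Dyadic

theorem iotaN_mul_iotaN_add_one (m : ℤ) : iotaN m * iotaN (m + 1) = Equiv.addLeft (2 ^ (-m)) := by
  ext x
  change (2 : ℂ) ^ (1 - m) - (2 ^ (1 - (m + 1)) - x) = 2 ^ (-m) + x
  rw [show 1 - (m + 1) = -m by ring, sub_eq_add_neg 1 m, zpow_add₀ two_ne_zero]
  ring

theorem dyadic_le_translationSubgroup_closure_range_iotaN :
    dyadic ≤ translationSubgroup (closure (range iotaN)) :=
  iSup_le fun k => AddSubgroup.zmultiples_le.2 <| by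
    change Equiv.addLeft ((2 : ℂ) ^ k)⁻¹ ∈ closure (range iotaN)
    rw [← zpow_natCast, ← zpow_neg, ← iotaN_mul_iotaN_add_one]
    exact mul_mem (subset_closure ⟨_, rfl⟩) (subset_closure ⟨_, rfl⟩)

theorem closure_range_iotaN : closure (range iotaN) = signedAffine dyadic := by
  refine le_antisymm ((closure_le _).2 ?_) ?_
  · rintro _ ⟨n, rfl⟩
    exact ⟨-1, 2 ^ (1 - n), Or.inr rfl, two_zpow_mem_dyadic _, fun x => by
      change (2 : ℂ) ^ (1 - n) - x = _
      ring⟩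
  · rintro f ⟨ε, a, rfl | rfl, ha, hf⟩
    · have hfa : f = Equiv.addLeft a := ext fun x => by simp [hf, add_comm]
      exact hfa ▸ dyadic_le_translationSubgroup_closure_range_iotaN ha
    · have hfa : f = Equiv.addLeft (a - 2) * iotaN 0 := ext fun x => by
        change f x = a - 2 + (2 ^ (1 - 0) - x)
        rw [hf]
        ring
      have h2 : (2 : ℂ) ∈ dyadic := by simpa using two_zpow_mem_dyadic 1
      exact hfa ▸ mul_mem (dyadic_le_translationSubgroup_closure_range_iotaN (sub_mem ha h2))
        (subset_closure ⟨0, rfl⟩)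

theorem signedAffine_dyadic_not_fg : ¬ (signedAffine dyadic).FG := by
  rintro ⟨S, hS⟩
  have hlevel : ∀ f ∈ S, ∃ k, f ∈ signedAffine (dyadicLevel k) := by
    intro f hf
    obtain ⟨ε, a, hε, ha, hfa⟩ := hS ▸ subset_closure hf
    obtain ⟨k, hk⟩ := mem_dyadic_iff_exists_mem_dyadicLevel.1 ha
    exact ⟨k, ε, a, hε, hk, hfa⟩
  choose! k hk using hlevel
  obtain ⟨K, hK⟩ := (S.image k).exists_le
  have hle : signedAffine dyadic ≤ signedAffine (dyadicLevel K) :=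
    hS ▸ (closure_le _).2 fun f hf =>
      signedAffine_mono (dyadicLevel_mono (hK _ (Finset.mem_image_of_mem k hf))) (hk f hf)
  apply inv_two_pow_succ_notMem_dyadicLevel K
  refine addLeft_mem_signedAffine_iff.1 (hle (addLeft_mem_signedAffine_iff.2 ?_))
  exact mem_dyadic_iff_exists_mem_dyadicLevel.2 ⟨K + 1, AddSubgroup.mem_zmultiples _⟩

/-- The subgroup generated by the involutions `ι_n (n ∈ ℤ)` equals the set of affine maps
`x ↦ εx + a` with `ε = ±1` and `a ∈ ℤ[1/2]`; in particular it is not finitely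
generated. -/
theorem stmt_10 :
    (∀ f : Equiv.Perm ℂ, f ∈ Subgroup.closure (Set.range iotaN) ↔
      ∃ ε a : ℂ, (ε = 1 ∨ ε = -1) ∧ (∃ (m : ℤ) (k : ℕ), a = (m : ℂ) / 2 ^ k) ∧
        ∀ x, f x = ε * x + a) ∧
    ¬ (Subgroup.closure (Set.range iotaN)).FG := by
  rw [closure_range_iotaN]
  exact ⟨fun f => by simp only [mem_signedAffine, mem_dyadic_iff], signedAffine_dyadic_not_fg⟩
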